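/- Let μ be the Prouhet–Thue–Morse endomorphism of the free monoid {a,b}*, determined by μ(a) = ab and μ(b) = ba. For every natural number n, the language Im μⁿ = {μⁿ(w) : w ∈ {a,b}*} is star-free. -/

import Mathlib

/-- The star-free languages over the alphabet `A`: the smallest class of languages
containing `∅`, `{ε}` and the singletons `{a}` for letters `a`, and closed under finite
union, concatenation, and complement. -/
inductive StarFree {A : Type} : Set (List A) → Prop
  | empty : StarFree (∅ : Set (List A))
  | eps : StarFree {([] : List A)}
  | single (a : A) : StarFree (({[a]} : Set (List A)))
  | union {L M : Set (List A)} : StarFree L → StarFree M → StarFree (L ∪ M)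
  | concat {L M : Set (List A)} : StarFree L → StarFree M →
      StarFree (Set.image2 (· ++ ·) L M)
  | compl {L : Set (List A)} : StarFree L → StarFree Lᶜ

/-- The Prouhet–Thue–Morse endomorphism of the free monoid on the two-letter alphabet
`Bool`, where `true` plays the role of `a` and `false` that of `b`: it is the unique
monoid endomorphism with `a ↦ ab` and `b ↦ ba`. -/
def ptm (w : List Bool) : List Bool :=
  w.flatMap fun c => if c then [true, false] else [false, true]

/-!
Write `μ` for `ptm`. Cutting a word between every two equal adjacent letters splits it into its
maximal alternating factors, and a word lies in `Im μ = {ab, ba}*` iff all of these have even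
length, i.e. none of them begins and ends with the same letter. Alternation is the absence of
the factors `aa` and `bb`, so the complement of `Im μ` is star-free. Since `μ` is an injective
morphism, `μ(Lᶜ) = Im μ ∩ μ(L)ᶜ`, and induction on star-free expressions shows that `μ` maps
star-free languages to star-free languages; now iterate.
-/

theorem List.isChain_ne_iff_forall_not_infix {A : Type*} {w : List A} :
    w.IsChain (· ≠ ·) ↔ ∀ a, ¬[a, a] <:+: w := by
  simp only [List.isChain_iff_forall_rel_of_append_cons_cons, List.IsInfix, ne_eq, not_exists,
    List.append_assoc, List.cons_append, List.nil_append]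
  exact ⟨fun h a l₁ l₂ hw => h hw.symm rfl,
    fun h a b l₁ l₂ hw hab => h a l₁ l₂ (by rw [hw, hab])⟩

namespace StarFree

variable {A : Type}

theorem of_eq {L M : Set (List A)} (hL : StarFree L) (h : L = M) : StarFree M := h ▸ hL

theorem univ : StarFree (Set.univ : Set (List A)) :=
  of_eq (.compl .empty) Set.compl_empty

theorem inter {L M : Set (List A)} (hL : StarFree L) (hM : StarFree M) : StarFree (L ∩ M) :=
  of_eq (.compl (.union hL.compl hM.compl)) (by rw [← Set.compl_inter, compl_compl])

theorem iUnion {ι : Type*} [Finite ι] {L : ι → Set (List A)} (h : ∀ i, StarFree (L i)) :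
    StarFree (⋃ i, L i) := by
  classical
  have : Fintype ι := Fintype.ofFinite ι
  have hfin (s : Finset ι) : StarFree (⋃ i ∈ s, L i) := by
    induction s using Finset.induction_on with
    | empty => exact of_eq .empty (by simp)
    | insert i s _ ih => exact of_eq (.union (h i) ih) (Finset.set_biUnion_insert ..).symm
  exact of_eq (hfin Finset.univ) (by simp)

theorem singleton (u : List A) : StarFree {u} := by
  induction u with
  | nil => exact .eps
  | cons a u ih => exact of_eq (.concat (.single a) ih) Set.image2_singleton

theorem setOf_isPrefix (u : List A) : StarFree {w | u <+: w} :=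
  of_eq (.concat (singleton u) univ) (by ext; simp [List.IsPrefix])

theorem setOf_isSuffix (u : List A) : StarFree {w | u <:+ w} :=
  of_eq (.concat univ (singleton u)) (by ext; simp [List.IsSuffix])

theorem setOf_isInfix (u : List A) : StarFree {w | u <:+: w} :=
  of_eq (.concat (.concat univ (singleton u)) univ) (by ext; simp [List.IsInfix])

theorem setOf_head?_eq_some (a : A) : StarFree {w | w.head? = some a} :=
  of_eq (setOf_isPrefix [a]) (by ext; simp [List.IsPrefix, List.head?_eq_some_iff, eq_comm])

theorem setOf_getLast?_eq_some (a : A) : StarFree {w | w.getLast? = some a} :=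
  of_eq (setOf_isSuffix [a]) (by ext; simp [List.IsSuffix, List.getLast?_eq_some_iff, eq_comm])

theorem setOf_isChain_ne [Finite A] : StarFree {w : List A | w.IsChain (· ≠ ·)} :=
  of_eq (.compl (iUnion fun a => setOf_isInfix [a, a]))
    (by ext; simp [List.isChain_ne_iff_forall_not_infix])

theorem image_flatMap {B : Type} {g : A → List B} (hinj : (List.flatMap g).Injective)
    (hrange : StarFree (Set.range (List.flatMap g))) {L : Set (List A)} (hL : StarFree L) :
    StarFree (List.flatMap g '' L) := by
  induction hL with
  | empty => exact of_eq .empty (Set.image_empty _).symm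
  | eps => exact of_eq .eps (by simp)
  | single a => exact of_eq (singleton (g a)) (by simp)
  | union _ _ ihL ihM => exact of_eq (.union ihL ihM) (Set.image_union ..).symm
  | concat _ _ ihL ihM =>
    refine of_eq (.concat ihL ihM) ?_
    rw [Set.image_image2_distrib fun _ _ => List.flatMap_append, Set.image2_image_left,
      Set.image2_image_right]
  | compl _ ih =>
    exact of_eq (hrange.inter ih.compl) (Set.image_compl_eq_range_sdiff_image hinj _).symm

end StarFree

theorem ptm_nil : ptm [] = [] := rfl

theorem ptm_cons (c : Bool) (u : List Bool) : ptm (c :: u) = c :: (!c) :: ptm u := by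
  cases c <;> rfl

theorem ptm_injective : Function.Injective ptm := by
  intro u v h
  induction u generalizing v with
  | nil => cases v <;> simp_all [ptm_cons, ptm_nil]
  | cons c u ih =>
    cases v with
    | nil => simp [ptm_cons, ptm_nil] at h
    | cons d v =>
      simp only [ptm_cons, List.cons.injEq] at h
      rw [h.1, ih h.2.2]

theorem singleton_not_mem_range_ptm (c : Bool) : [c] ∉ Set.range ptm := by
  rintro ⟨_ | ⟨d, u⟩, h⟩ <;> simp [ptm_cons, ptm_nil] at h

theorem cons_cons_mem_range_ptm_iff (c d : Bool) (w : List Bool) :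
    c :: d :: w ∈ Set.range ptm ↔ d = !c ∧ w ∈ Set.range ptm := by
  constructor
  · rintro ⟨_ | ⟨e, u⟩, h⟩
    · simp [ptm_nil] at h
    · simp only [ptm_cons, List.cons.injEq] at h
      obtain ⟨rfl, rfl, rfl⟩ := h
      exact ⟨rfl, u, rfl⟩
  · rintro ⟨rfl, u, rfl⟩
    exact ⟨c :: u, ptm_cons c u⟩

def oddAlternating (c : Bool) : Set (List Bool) :=
  {r | r.IsChain (· ≠ ·) ∧ r.head? = some c ∧ r.getLast? = some c}

/-- The factor `r` is a maximal alternating one: the letter on either side of it, if any,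
repeats the end letter `c` of `r`. -/
def hasOddMaximalRun : Set (List Bool) :=
  {w | ∃ c x r y, (x = [] ∨ x.getLast? = some c) ∧ r ∈ oddAlternating c ∧
    (y = [] ∨ y.head? = some c) ∧ w = x ++ r ++ y}

theorem singleton_mem_oddAlternating (c : Bool) : [c] ∈ oddAlternating c :=
  ⟨.singleton c, rfl, rfl⟩

theorem cons_cons_mem_oddAlternating_iff {c : Bool} {r : List Bool} :
    c :: (!c) :: r ∈ oddAlternating c ↔ r ∈ oddAlternating c := by
  cases r with
  | nil => simp [oddAlternating]
  | cons d r => cases c <;> cases d <;> simp [oddAlternating, List.isChain_cons_cons]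

theorem nil_not_mem_hasOddMaximalRun : [] ∉ hasOddMaximalRun := by
  rintro ⟨c, x, r, y, -, hr, -, hw⟩
  have : r = [] := by simp_all
  simp [this, oddAlternating] at hr

theorem singleton_mem_hasOddMaximalRun (c : Bool) : [c] ∈ hasOddMaximalRun :=
  ⟨c, [], [c], [], .inl rfl, singleton_mem_oddAlternating c, .inl rfl, rfl⟩

theorem cons_cons_self_mem_hasOddMaximalRun (c : Bool) (v : List Bool) :
    c :: c :: v ∈ hasOddMaximalRun :=
  ⟨c, [], [c], c :: v, .inl rfl, singleton_mem_oddAlternating c, .inr rfl, rfl⟩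

theorem cons_cons_mem_hasOddMaximalRun {c : Bool} {w : List Bool} (h : w ∈ hasOddMaximalRun) :
    c :: (!c) :: w ∈ hasOddMaximalRun := by
  obtain ⟨d, x, r, y, hx, hr, hy, rfl⟩ := h
  rcases hx with rfl | hx
  · obtain ⟨r, rfl⟩ := List.head?_eq_some_iff.mp hr.2.1
    by_cases hdc : d = c
    · subst hdc
      exact ⟨d, [], d :: (!d) :: d :: r, y, .inl rfl, cons_cons_mem_oddAlternating_iff.mpr hr, hy,
        rfl⟩
    · refine ⟨d, [c, !c], d :: r, y, .inr ?_, hr, hy, rfl⟩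
      cases c <;> cases d <;> simp_all
  · exact ⟨d, c :: (!c) :: x, r, y, .inr (by simp [List.getLast?_cons, hx]), hr, hy, rfl⟩

theorem mem_hasOddMaximalRun_of_cons_cons {c : Bool} {w : List Bool}
    (h : c :: (!c) :: w ∈ hasOddMaximalRun) : w ∈ hasOddMaximalRun := by
  obtain ⟨d, x, r, y, hx, hr, hy, hw⟩ := h
  obtain ⟨r, rfl⟩ := List.head?_eq_some_iff.mp hr.2.1
  rcases x with _ | ⟨x₀, _ | ⟨x₁, x⟩⟩
  · simp only [List.nil_append, List.cons_append, List.cons.injEq] at hw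
    obtain ⟨rfl, hw⟩ := hw
    rcases r with _ | ⟨e, r⟩
    · cases hw
      cases c <;> simp at hy
    · simp only [List.cons_append, List.cons.injEq] at hw
      obtain ⟨rfl, rfl⟩ := hw
      exact ⟨c, [], r, y, .inl rfl, cons_cons_mem_oddAlternating_iff.mp hr, hy, rfl⟩
  · simp only [List.cons_append, List.nil_append, List.cons.injEq] at hw hx
    obtain ⟨rfl, rfl, -⟩ := hw
    cases c <;> simp at hx
  · simp only [List.cons_append, List.cons.injEq] at hw
    obtain ⟨-, -, rfl⟩ := hw
    refine ⟨d, x, d :: r, y, ?_, hr, hy, by simp⟩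
    cases x <;> simp_all [List.getLast?_cons]

theorem cons_cons_mem_hasOddMaximalRun_iff (c : Bool) (w : List Bool) :
    c :: (!c) :: w ∈ hasOddMaximalRun ↔ w ∈ hasOddMaximalRun :=
  ⟨mem_hasOddMaximalRun_of_cons_cons, cons_cons_mem_hasOddMaximalRun⟩

theorem range_ptm_eq_compl_hasOddMaximalRun : Set.range ptm = hasOddMaximalRunᶜ := by
  ext w
  induction w using List.twoStepInduction with
  | nil => exact ⟨fun _ => nil_not_mem_hasOddMaximalRun, fun _ => ⟨[], rfl⟩⟩
  | singleton c =>
    exact iff_of_false (singleton_not_mem_range_ptm c)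
      (not_not_intro (singleton_mem_hasOddMaximalRun c))
  | cons_cons c d w ih =>
    rw [cons_cons_mem_range_ptm_iff]
    by_cases hd : d = !c
    · subst hd
      simp [ih, cons_cons_mem_hasOddMaximalRun_iff]
    · obtain rfl : d = c := by cases c <;> cases d <;> simp_all
      simp [cons_cons_self_mem_hasOddMaximalRun]

theorem starFree_hasOddMaximalRun : StarFree hasOddMaximalRun := by
  have hleft (c : Bool) : StarFree {x : List Bool | x = [] ∨ x.getLast? = some c} :=
    .union .eps (.setOf_getLast?_eq_some c)
  have hright (c : Bool) : StarFree {y : List Bool | y = [] ∨ y.head? = some c} :=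
    .union .eps (.setOf_head?_eq_some c)
  have hodd (c : Bool) : StarFree (oddAlternating c) :=
    .inter .setOf_isChain_ne (.inter (.setOf_head?_eq_some c) (.setOf_getLast?_eq_some c))
  refine .of_eq (.iUnion fun c => .concat (.concat (hleft c) (hodd c)) (hright c)) ?_
  ext w
  simp only [Set.mem_iUnion, Set.mem_image2, Set.mem_ofPred_eq, hasOddMaximalRun]
  constructor
  · rintro ⟨c, _, ⟨x, hx, r, hr, rfl⟩, y, hy, rfl⟩
    exact ⟨c, x, r, y, hx, hr, hy, rfl⟩
  · rintro ⟨c, x, r, y, hx, hr, hy, rfl⟩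
    exact ⟨c, _, ⟨x, hx, r, hr, rfl⟩, y, hy, rfl⟩

theorem starFree_range_ptm : StarFree (Set.range ptm) :=
  .of_eq starFree_hasOddMaximalRun.compl range_ptm_eq_compl_hasOddMaximalRun.symm

theorem StarFree.image_ptm {L : Set (List Bool)} (hL : StarFree L) : StarFree (ptm '' L) :=
  .image_flatMap ptm_injective starFree_range_ptm hL

/-- For every `n`, the image of the `n`-th iterate of the
Prouhet–Thue–Morse endomorphism is a star-free language. -/
theorem starFree_range_ptm_iterate (n : ℕ) : StarFree (Set.range (ptm^[n])) := by
  induction n with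
  | zero => exact .of_eq .univ Set.range_id.symm
  | succ n ih =>
    rw [Function.iterate_succ', Set.range_comp]
    exact ih.image_ptm
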